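/- Upper p₀-estimate: let 1 ≤ p₀ < ∞ and let p : ℕ → [1,∞] satisfy p(n) ≥ p₀ for every n. Then for any finite family x₁, …, x_n of bounded sequences with pairwise disjoint supports one has Φ_p(x₁ + ⋯ + x_n) ≤ (∑_{i=1}^n Φ_p(x_i)^{p₀})^{1/p₀}. -/

import Mathlib

/-! The estimate is proved for every truncation `|||·|||_(k)` by induction on `k` and then passes
to the supremum. In a single coordinate at most one of the `xᵢ` is nonzero. In the inductive
step, raising to the power `p₀` turns `⊞_q` into `⊞_{q/p₀}`, which for `q/p₀ ≥ 1` is the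
`ℓ^{q/p₀}`-norm on `ℝ²`; its triangle inequality for a finite sum is exactly the bound
`(∑ aᵢ^p₀)^(1/p₀) ⊞_q (∑ bᵢ^p₀)^(1/p₀) ≤ (∑ (aᵢ ⊞_q bᵢ)^p₀)^(1/p₀)`. -/

open scoped ENNReal

/-- `t ⊞_p s`: for `p < ∞`, `(t^p + s^p)^(1/p)`; for `p = ∞`, `max t s`. -/
noncomputable def boxPlus (p : ℝ≥0∞) (t s : ℝ) : ℝ :=
  if p = ∞ then max t s else (t ^ p.toReal + s ^ p.toReal) ^ (1 / p.toReal)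

/-- The recursively defined seminorms `|||x|||_(k)` (0-indexed). -/
noncomputable def seqNorm (p : ℕ → ℝ≥0∞) (x : ℕ → ℝ) : ℕ → ℝ
  | 0 => boxPlus (p 0) |x 0| |x 1|
  | k + 1 => boxPlus (p (k + 1)) (seqNorm p x k) |x (k + 2)|

/-- `Φ_p(x) = lim_k |||x|||_(k)`, as the supremum of the nondecreasing sequence. -/
noncomputable def Phi (p : ℕ → ℝ≥0∞) (x : ℕ → ℝ) : ℝ≥0∞ :=
  ⨆ k, ENNReal.ofReal (seqNorm p x k)

/-- `x` is a bounded real sequence, i.e. `x ∈ ℓ^∞`. -/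
def IsBddSeq (x : ℕ → ℝ) : Prop := ∃ M : ℝ, ∀ n, |x n| ≤ M

/-- Membership in the variable exponent space `ℓ^{p(·)}`. -/
def MemVLp (p : ℕ → ℝ≥0∞) (x : ℕ → ℝ) : Prop := IsBddSeq x ∧ Phi p x < ⊤

open Finset

lemma boxPlus_nonneg (q : ℝ≥0∞) {t s : ℝ} (ht : 0 ≤ t) (hs : 0 ≤ s) : 0 ≤ boxPlus q t s := by
  unfold boxPlus
  split_ifs
  · exact le_max_of_le_left ht
  · positivity

lemma boxPlus_le_boxPlus (q : ℝ≥0∞) {t t' s s' : ℝ} (ht : 0 ≤ t) (hs : 0 ≤ s)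
    (htt' : t ≤ t') (hss' : s ≤ s') : boxPlus q t s ≤ boxPlus q t' s' := by
  unfold boxPlus
  split_ifs
  · exact max_le_max htt' hss'
  · gcongr

lemma boxPlus_eq_norm_toLp {q : ℝ≥0∞} (hq : q ≠ 0) {t s : ℝ} (ht : 0 ≤ t) (hs : 0 ≤ s) :
    boxPlus q t s = ‖WithLp.toLp q (t, s)‖ := by
  by_cases hqT : q = ∞
  · subst hqT
    simp [boxPlus, WithLp.prod_norm_eq_sup, abs_of_nonneg ht, abs_of_nonneg hs]
  · rw [WithLp.prod_norm_eq_add (ENNReal.toReal_pos hq hqT)]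
    simp [boxPlus, hqT, abs_of_nonneg ht, abs_of_nonneg hs]

lemma boxPlus_sum_le_sum_boxPlus {q : ℝ≥0∞} [Fact (1 ≤ q)] {ι : Type*} (s : Finset ι)
    {f g : ι → ℝ} (hf : ∀ i ∈ s, 0 ≤ f i) (hg : ∀ i ∈ s, 0 ≤ g i) :
    boxPlus q (∑ i ∈ s, f i) (∑ i ∈ s, g i) ≤ ∑ i ∈ s, boxPlus q (f i) (g i) := by
  have hq : q ≠ 0 := (zero_lt_one.trans_le Fact.out).ne'
  rw [boxPlus_eq_norm_toLp hq (sum_nonneg hf) (sum_nonneg hg),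
    sum_congr rfl fun i hi => boxPlus_eq_norm_toLp hq (hf i hi) (hg i hi)]
  calc ‖WithLp.toLp q (∑ i ∈ s, f i, ∑ i ∈ s, g i)‖
      = ‖∑ i ∈ s, WithLp.toLp q (f i, g i)‖ := by rw [← WithLp.toLp_sum, prod_mk_sum]
    _ ≤ ∑ i ∈ s, ‖WithLp.toLp q (f i, g i)‖ := norm_sum_le _ _

lemma boxPlus_rpow (q : ℝ≥0∞) {c : ℝ} (hc : 0 < c) {t s : ℝ} (ht : 0 ≤ t) (hs : 0 ≤ s) :
    boxPlus q t s ^ c = boxPlus (q / ENNReal.ofReal c) (t ^ c) (s ^ c) := by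
  by_cases hqT : q = ∞
  · simp [boxPlus, hqT, ENNReal.top_div_of_ne_top, Real.rpow_max ht hs hc.le]
  · have hq' : q / ENNReal.ofReal c ≠ ∞ := ENNReal.div_ne_top hqT (by simpa using hc)
    simp only [boxPlus, hqT, hq', if_false, ENNReal.toReal_div, ENNReal.toReal_ofReal hc.le]
    rw [← Real.rpow_mul ht, ← Real.rpow_mul hs, mul_div_cancel₀ _ hc.ne',
      ← Real.rpow_mul (by positivity)]
    congr 1
    field_simp

lemma boxPlus_Lp_le_Lp_boxPlus {q : ℝ≥0∞} {p₀ : ℝ} (hp₀ : 0 < p₀) (hq : ENNReal.ofReal p₀ ≤ q)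
    {ι : Type*} (s : Finset ι) {a b : ι → ℝ} (ha : ∀ i ∈ s, 0 ≤ a i) (hb : ∀ i ∈ s, 0 ≤ b i) :
    boxPlus q ((∑ i ∈ s, a i ^ p₀) ^ (1 / p₀)) ((∑ i ∈ s, b i ^ p₀) ^ (1 / p₀)) ≤
      (∑ i ∈ s, boxPlus q (a i) (b i) ^ p₀) ^ (1 / p₀) := by
  have : Fact (1 ≤ q / ENNReal.ofReal p₀) :=
    ⟨(ENNReal.le_div_iff_mul_le (.inl (by simpa using hp₀)) (.inl ENNReal.ofReal_ne_top)).2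
      (by rwa [one_mul])⟩
  have hU : 0 ≤ ∑ i ∈ s, a i ^ p₀ := sum_nonneg fun i hi => by have := ha i hi; positivity
  have hV : 0 ≤ ∑ i ∈ s, b i ^ p₀ := sum_nonneg fun i hi => by have := hb i hi; positivity
  have hW : 0 ≤ ∑ i ∈ s, boxPlus q (a i) (b i) ^ p₀ :=
    sum_nonneg fun i hi => by have := boxPlus_nonneg q (ha i hi) (hb i hi); positivity
  rw [← Real.rpow_le_rpow_iff (boxPlus_nonneg _ (by positivity) (by positivity))
      (by positivity) hp₀,
    boxPlus_rpow q hp₀ (by positivity) (by positivity), one_div, Real.rpow_inv_rpow hU hp₀.ne',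
    Real.rpow_inv_rpow hV hp₀.ne', Real.rpow_inv_rpow hW hp₀.ne']
  calc boxPlus (q / ENNReal.ofReal p₀) (∑ i ∈ s, a i ^ p₀) (∑ i ∈ s, b i ^ p₀)
      ≤ ∑ i ∈ s, boxPlus (q / ENNReal.ofReal p₀) (a i ^ p₀) (b i ^ p₀) :=
        boxPlus_sum_le_sum_boxPlus s (fun i hi => by have := ha i hi; positivity)
          (fun i hi => by have := hb i hi; positivity)
    _ = ∑ i ∈ s, boxPlus q (a i) (b i) ^ p₀ :=
        sum_congr rfl fun i hi => (boxPlus_rpow q hp₀ (ha i hi) (hb i hi)).symm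

lemma abs_sum_le_Lp_of_pairwise {ι : Type*} [Fintype ι] {p₀ : ℝ} (hp₀ : 0 < p₀) {f : ι → ℝ}
    (hf : Pairwise fun i j => f i = 0 ∨ f j = 0) :
    |∑ i, f i| ≤ (∑ i, |f i| ^ p₀) ^ (1 / p₀) := by
  by_cases h : ∃ j, f j ≠ 0
  · obtain ⟨j, hj⟩ := h
    have hsum : ∑ i, f i = f j := Fintype.sum_eq_single j fun i hij => (hf hij).resolve_right hj
    calc |∑ i, f i| = (|f j| ^ p₀) ^ (1 / p₀) := by
          rw [hsum, one_div, Real.rpow_rpow_inv (abs_nonneg _) hp₀.ne']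
      _ ≤ (∑ i, |f i| ^ p₀) ^ (1 / p₀) := by
          gcongr
          exact single_le_sum (f := fun i => |f i| ^ p₀) (fun i _ => by positivity) (mem_univ j)
  · push Not at h
    simp only [h, sum_const_zero, abs_zero]
    positivity

lemma seqNorm_nonneg (p : ℕ → ℝ≥0∞) (x : ℕ → ℝ) : ∀ k, 0 ≤ seqNorm p x k
  | 0 => boxPlus_nonneg _ (abs_nonneg _) (abs_nonneg _)
  | k + 1 => boxPlus_nonneg _ (seqNorm_nonneg p x k) (abs_nonneg _)

lemma seqNorm_sum_le_Lp {p : ℕ → ℝ≥0∞} {p₀ : ℝ} (hp₀ : 0 < p₀) (hp : ∀ m, ENNReal.ofReal p₀ ≤ p m)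
    {ι : Type*} [Fintype ι] {x : ι → ℕ → ℝ} (hx : Pairwise fun i j => ∀ m, x i m = 0 ∨ x j m = 0)
    (k : ℕ) : seqNorm p (fun m => ∑ i, x i m) k ≤ (∑ i, seqNorm p (x i) k ^ p₀) ^ (1 / p₀) := by
  have hcoord (m : ℕ) : |∑ i, x i m| ≤ (∑ i, |x i m| ^ p₀) ^ (1 / p₀) :=
    abs_sum_le_Lp_of_pairwise hp₀ fun i j hij => hx hij m
  induction k with
  | zero =>
    exact (boxPlus_le_boxPlus _ (abs_nonneg _) (abs_nonneg _) (hcoord 0) (hcoord 1)).trans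
      (boxPlus_Lp_le_Lp_boxPlus hp₀ (hp 0) _ (fun i _ => abs_nonneg _) fun i _ => abs_nonneg _)
  | succ k ih =>
    exact (boxPlus_le_boxPlus _ (seqNorm_nonneg _ _ k) (abs_nonneg _) ih (hcoord (k + 2))).trans
      (boxPlus_Lp_le_Lp_boxPlus hp₀ (hp (k + 1)) _ (fun i _ => seqNorm_nonneg _ _ k)
        fun i _ => abs_nonneg _)

lemma ENNReal.ofReal_Lp {ι : Type*} (s : Finset ι) {p₀ : ℝ} (hp₀ : 0 < p₀) {a : ι → ℝ}
    (ha : ∀ i ∈ s, 0 ≤ a i) :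
    ENNReal.ofReal ((∑ i ∈ s, a i ^ p₀) ^ (1 / p₀)) =
      (∑ i ∈ s, ENNReal.ofReal (a i) ^ p₀) ^ (1 / p₀) := by
  rw [← ENNReal.ofReal_rpow_of_nonneg (sum_nonneg fun i hi => by have := ha i hi; positivity)
      (by positivity), ENNReal.ofReal_sum_of_nonneg fun i hi => by have := ha i hi; positivity]
  congr 1
  exact sum_congr rfl fun i hi => (ENNReal.ofReal_rpow_of_nonneg (ha i hi) hp₀.le).symm

theorem upper_estimate_general (p : ℕ → ℝ≥0∞) (p₀ : ℝ) (hp₀ : 1 ≤ p₀)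
    (hp : ∀ m, ENNReal.ofReal p₀ ≤ p m)
    (N : ℕ) (x : Fin N → ℕ → ℝ)
    (hdisj : ∀ i j, i ≠ j → ∀ m, x i m = 0 ∨ x j m = 0) :
    Phi p (fun m => ∑ i, x i m) ≤ (∑ i, Phi p (x i) ^ p₀) ^ (1 / p₀) := by
  have hp₀' : 0 < p₀ := zero_lt_one.trans_le hp₀
  refine iSup_le fun k => ?_
  calc ENNReal.ofReal (seqNorm p (fun m => ∑ i, x i m) k)
      ≤ ENNReal.ofReal ((∑ i, seqNorm p (x i) k ^ p₀) ^ (1 / p₀)) :=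
        ENNReal.ofReal_le_ofReal (seqNorm_sum_le_Lp hp₀' hp (fun i j hij => hdisj i j hij) k)
    _ = (∑ i, ENNReal.ofReal (seqNorm p (x i) k) ^ p₀) ^ (1 / p₀) :=
        ENNReal.ofReal_Lp _ hp₀' fun i _ => seqNorm_nonneg p (x i) k
    _ ≤ (∑ i, Phi p (x i) ^ p₀) ^ (1 / p₀) := by
        gcongr with i
        exact le_iSup (fun k => ENNReal.ofReal (seqNorm p (x i) k)) k

/-- Upper `p₀`-estimate for disjointly supported vectors in `ℓ^{p(·)}`
when `p(n) ≥ p₀` for all `n`. -/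
theorem upper_estimate (p : ℕ → ℝ≥0∞) (p₀ : ℝ) (hp₀ : 1 ≤ p₀)
    (hp : ∀ m, ENNReal.ofReal p₀ ≤ p m)
    (N : ℕ) (x : Fin N → ℕ → ℝ) (hbdd : ∀ i, IsBddSeq (x i))
    (hdisj : ∀ i j, i ≠ j → ∀ m, x i m = 0 ∨ x j m = 0) :
    Phi p (fun m => ∑ i, x i m) ≤ (∑ i, Phi p (x i) ^ p₀) ^ (1 / p₀) :=
  upper_estimate_general p p₀ hp₀ hp N x hdisj
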